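/- Let u be a function with integral analytic singularities, i.e., locally u = log|f|² + b with f a tuple of holomorphic functions and b bounded, and let τ : W → Y be a holomorphic map between complex manifolds with W connected. Then τ*u = u ∘ τ either is identically -∞ or has integral analytic singularities on W, i.e., locally τ*u = log|g|² + b' with g a tuple of holomorphic functions and b' bounded. -/
import Mathlib


open Complex

/-- Extended logarithm, with `log 0 = -∞`. -/
noncomputable def elog (x : ENNReal) : EReal :=
  if x = 0 then ⊥ else if x = ⊤ then ⊤ else ((Real.log x.toReal : ℝ) : EReal)

/-- `u` has integral analytic singularities on `U ⊆ ℂⁿ`: locally `u = log |f|² + b`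
where `f = (f₁,…,f_m)` is a tuple of holomorphic functions and `b` is bounded. -/
def HasIntegralAnalyticSingularitiesOn {n : ℕ}
    (u : (Fin n → ℂ) → EReal) (U : Set (Fin n → ℂ)) : Prop :=
  ∀ x ∈ U, ∃ V : Set (Fin n → ℂ), IsOpen V ∧ x ∈ V ∧ V ⊆ U ∧
    ∃ (m : ℕ) (f : Fin m → (Fin n → ℂ) → ℂ) (b : (Fin n → ℂ) → ℝ) (C : ℝ),
      (∀ j, DifferentiableOn ℂ (f j) V) ∧
      (∀ y ∈ V, |b y| ≤ C) ∧
      ∀ y ∈ V, u y = elog (∑ j, (‖f j y‖₊ : ENNReal) ^ 2) + ((b y : ℝ) : EReal)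

/-- the pullback of a function with integral analytic singularities
under a holomorphic map `τ : W → Y` (`W` connected) is identically `-∞` or has
integral analytic singularities. -/
theorem stmt2 {k n : ℕ} {W : Set (Fin k → ℂ)} {U : Set (Fin n → ℂ)}
    (hWopen : IsOpen W) (hWconn : IsConnected W) (hUopen : IsOpen U)
    (τ : (Fin k → ℂ) → (Fin n → ℂ))
    (hτ : ∀ i, DifferentiableOn ℂ (fun w => τ w i) W)
    (hmap : Set.MapsTo τ W U)
    (u : (Fin n → ℂ) → EReal)
    (hu : HasIntegralAnalyticSingularitiesOn u U) :
    (∀ w ∈ W, u (τ w) = ⊥) ∨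
      HasIntegralAnalyticSingularitiesOn (fun w => u (τ w)) W := by
  right
  have hτdiff : DifferentiableOn ℂ τ W := by
    apply differentiableOn_pi.mpr
    exact hτ
  have hτcont : ContinuousOn τ W := hτdiff.continuousOn
  intro w hw
  obtain ⟨V, hVopen, hxV, hVU, m, f, b, C, hf, hb, heq⟩ := hu (τ w) (hmap hw)
  refine ⟨W ∩ τ ⁻¹' V, ?_, ⟨hw, hxV⟩, Set.inter_subset_left, m,
    fun j y => f j (τ y), fun y => b (τ y), C, ?_, ?_, ?_⟩
  · exact hτcont.isOpen_inter_preimage hWopen hVopen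
  · intro j
    exact (hf j).comp (hτdiff.mono Set.inter_subset_left)
      (fun y hy => hy.2)
  · intro y hy
    exact hb (τ y) hy.2
  · intro y hy
    exact heq (τ y) hy.2
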